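/- Let n ≥ 4 and let Z_i = (X_i, Y_i), i = 1,…,n, be i.i.d. random vectors in ℝ^p × ℝ^q with E‖X₁‖ < ∞ and E‖Y₁‖ < ∞. Then the sample distance covariance admits the U-statistic representation dcov*²(X,Y) = C(n,4)^{-1} · Σ_{i₁<i₂<i₃<i₄} k(Z_{i₁},Z_{i₂},Z_{i₃},Z_{i₄}), where the symmetric kernel k may be taken to be either k(Z₁,Z₂,Z₃,Z₄) = (1/4!)·Σ_{(i₁,…,i₄)} [ ‖X_{i₁}−X_{i₂}‖·‖Y_{i₁}−Y_{i₂}‖ + ‖X_{i₁}−X_{i₂}‖·‖Y_{i₃}−Y_{i₄}‖ − 2‖X_{i₁}−X_{i₂}‖·‖Y_{i₁}−Y_{i₃}‖ ], or k(Z₁,Z₂,Z₃,Z₄) = (1/4!)·Σ_{(i₁,…,i₄)} [ U(X_{i₁},X_{i₂})·V(Y_{i₁},Y_{i₂}) + U(X_{i₁},X_{i₂})·V(Y_{i₃},Y_{i₄}) − 2·U(X_{i₁},X_{i₂})·V(Y_{i₁},Y_{i₃}) ], where in both cases (i₁,…,i₄) ranges over all 24 ordered permutations of (1,2,3,4). 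-/

import Mathlib

open MeasureTheory ProbabilityTheory Matrix

noncomputable section

/-- Euclidean norm of a finite real vector. -/
def vecNorm {ι : Type*} [Fintype ι] (v : ι → ℝ) : ℝ :=
  Real.sqrt (∑ i, v i ^ 2)

/-- Frobenius norm of a real matrix. -/
def mFrob {m n : Type*} [Fintype m] [Fintype n] (A : Matrix m n ℝ) : ℝ :=
  Real.sqrt (∑ i, ∑ j, A i j ^ 2)

/-- Operator (spectral) norm of a real matrix. -/
def mOp {ι : Type*} [Fintype ι] (A : Matrix ι ι ℝ) : ℝ :=
  ⨆ v : ι → ℝ, vecNorm (A *ᵥ v) / vecNorm v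

/-- `U`-centering of an `n × n` matrix. -/
def uCenter {n : ℕ} (A : Matrix (Fin n) (Fin n) ℝ) : Matrix (Fin n) (Fin n) ℝ :=
  Matrix.of fun k l =>
    A k l - (∑ j, A j l) / ((n : ℝ) - 2) - (∑ j, A k j) / ((n : ℝ) - 2)
      + (∑ i, ∑ j, A i j) / (((n : ℝ) - 1) * ((n : ℝ) - 2))

/-- Bias-corrected sample distance covariance. -/
def dcovStar {n p q : ℕ} (X : Fin n → Fin p → ℝ) (Y : Fin n → Fin q → ℝ) : ℝ :=
  ((n : ℝ) * ((n : ℝ) - 3))⁻¹ *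
    ∑ k, ∑ l, if k ≠ l then
        uCenter (Matrix.of fun i j => vecNorm (X i - X j)) k l *
        uCenter (Matrix.of fun i j => vecNorm (Y i - Y j)) k l
      else 0

/-- Generalized kernel sample distance covariance. -/
def dcovStarK {n p q : ℕ} (fX fY : ℝ → ℝ) (gX gY : ℝ)
    (X : Fin n → Fin p → ℝ) (Y : Fin n → Fin q → ℝ) : ℝ :=
  ((n : ℝ) * ((n : ℝ) - 3))⁻¹ *
    ∑ k, ∑ l, if k ≠ l then
        uCenter (Matrix.of fun i j => if i ≠ j then fX (vecNorm (X i - X j) / gX) else 0) k l *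
        uCenter (Matrix.of fun i j => if i ≠ j then fY (vecNorm (Y i - Y j) / gY) else 0) k l
      else 0

/-- Population distance covariance, expressed through three iid copies. -/
def dcovPop {Ω : Type*} [MeasurableSpace Ω] {p q : ℕ} (μ : Measure Ω)
    (X0 X1 X2 : Ω → Fin p → ℝ) (Y0 Y1 Y2 : Ω → Fin q → ℝ) : ℝ :=
  (∫ ω, vecNorm (X0 ω - X1 ω) * vecNorm (Y0 ω - Y1 ω) ∂μ)
    - 2 * (∫ ω, vecNorm (X0 ω - X1 ω) * vecNorm (Y0 ω - Y2 ω) ∂μ)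
    + (∫ ω, vecNorm (X0 ω - X1 ω) ∂μ) * (∫ ω, vecNorm (Y0 ω - Y1 ω) ∂μ)

/-- Population generalized kernel distance covariance. -/
def dcovPopK {Ω : Type*} [MeasurableSpace Ω] {p q : ℕ} (μ : Measure Ω)
    (fX fY : ℝ → ℝ) (gX gY : ℝ)
    (X0 X1 X2 : Ω → Fin p → ℝ) (Y0 Y1 Y2 : Ω → Fin q → ℝ) : ℝ :=
  (∫ ω, fX (vecNorm (X0 ω - X1 ω) / gX) * fY (vecNorm (Y0 ω - Y1 ω) / gY) ∂μ)
    - 2 * (∫ ω, fX (vecNorm (X0 ω - X1 ω) / gX) * fY (vecNorm (Y0 ω - Y2 ω) / gY) ∂μ)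
    + (∫ ω, fX (vecNorm (X0 ω - X1 ω) / gX) ∂μ) * (∫ ω, fY (vecNorm (Y0 ω - Y1 ω) / gY) ∂μ)

/-- `W` is a centered Gaussian random vector with covariance matrix `S`:
every linear functional of `W` is a centered one-dimensional Gaussian with the
corresponding variance. -/
def IsCenteredGaussian {Ω : Type*} [MeasurableSpace Ω] (μ : Measure Ω)
    {ι : Type*} [Fintype ι] (W : Ω → ι → ℝ) (S : Matrix ι ι ℝ) : Prop :=
  ∀ a : ι → ℝ,
    Measure.map (fun ω => ∑ i, a i * W ω i) μ =
      gaussianReal 0 (Real.toNNReal (a ⬝ᵥ (S *ᵥ a)))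

/-- Kolmogorov distance between (the law of) a real random variable and `N(0,1)`. -/
def dKolN {Ω : Type*} [MeasurableSpace Ω] (μ : Measure Ω) (f : Ω → ℝ) : ℝ :=
  ⨆ t : ℝ, |(μ {ω | f ω ≤ t}).toReal - ((gaussianReal 0 1) (Set.Iic t)).toReal|

def sigBar1 {p q : ℕ} (n : ℕ) (SX : Matrix (Fin p) (Fin p) ℝ)
    (SXY : Matrix (Fin p) (Fin q) ℝ) (SY : Matrix (Fin q) (Fin q) ℝ) : ℝ :=
  (4 / ((n : ℝ) * (2 * SX.trace) * (2 * SY.trace))) *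
    (mFrob (SXY * SXYᵀ) ^ 2 + (SXY * SY * SXYᵀ * SX).trace
      + mFrob SXY ^ 4 * mFrob SX ^ 2 / (2 * (2 * SX.trace) ^ 2)
      + mFrob SXY ^ 4 * mFrob SY ^ 2 / (2 * (2 * SY.trace) ^ 2)
      - 2 * mFrob SXY ^ 2 / (2 * SX.trace) * (SXY * SXYᵀ * SX).trace
      - 2 * mFrob SXY ^ 2 / (2 * SY.trace) * (SXYᵀ * SXY * SY).trace
      + mFrob SXY ^ 6 / ((2 * SX.trace) * (2 * SY.trace)))

def sigBar2 {p q : ℕ} (n : ℕ) (SX : Matrix (Fin p) (Fin p) ℝ)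
    (SXY : Matrix (Fin p) (Fin q) ℝ) (SY : Matrix (Fin q) (Fin q) ℝ) : ℝ :=
  (2 / ((n : ℝ) * ((n : ℝ) - 1) * (2 * SX.trace) * (2 * SY.trace))) *
    (mFrob SX ^ 2 * mFrob SY ^ 2 + mFrob SXY ^ 4)

def sigBar {p q : ℕ} (n : ℕ) (SX : Matrix (Fin p) (Fin p) ℝ)
    (SXY : Matrix (Fin p) (Fin q) ℝ) (SY : Matrix (Fin q) (Fin q) ℝ) : ℝ :=
  sigBar1 n SX SXY SY + sigBar2 n SX SXY SY

def sigBar1X {p : ℕ} (n : ℕ) (SX : Matrix (Fin p) (Fin p) ℝ) : ℝ :=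
  (1 / ((n : ℝ) * SX.trace ^ 2)) *
    (2 * mFrob (SX * SX) ^ 2 + mFrob SX ^ 6 / (2 * SX.trace ^ 2)
      - 2 * mFrob SX ^ 2 * (SX * SX * SX).trace / SX.trace)

def sigBar2X {p : ℕ} (n : ℕ) (SX : Matrix (Fin p) (Fin p) ℝ) : ℝ :=
  mFrob SX ^ 4 / ((n : ℝ) * ((n : ℝ) - 1) * SX.trace ^ 2)

def sigBarX {p : ℕ} (n : ℕ) (SX : Matrix (Fin p) (Fin p) ℝ) : ℝ :=
  sigBar1X n SX + sigBar2X n SX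

/-- The corrected first-order Hoeffding main term `ḡ₁`. -/
def gbar1 {p q : ℕ} (SX : Matrix (Fin p) (Fin p) ℝ) (SXY : Matrix (Fin p) (Fin q) ℝ)
    (SY : Matrix (Fin q) (Fin q) ℝ) (x : Fin p → ℝ) (y : Fin q → ℝ) : ℝ :=
  (1 / (2 * Real.sqrt (2 * SX.trace) * Real.sqrt (2 * SY.trace))) *
    ((x ⬝ᵥ (SXY *ᵥ y) - mFrob SXY ^ 2)
      - mFrob SXY ^ 2 / (2 * (2 * SX.trace)) * (vecNorm x ^ 2 - SX.trace)
      - mFrob SXY ^ 2 / (2 * (2 * SY.trace)) * (vecNorm y ^ 2 - SY.trace))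

/-- The second-order Hoeffding main term `ḡ₂`. -/
def gbar2 {p q : ℕ} (SX : Matrix (Fin p) (Fin p) ℝ) (SXY : Matrix (Fin p) (Fin q) ℝ)
    (SY : Matrix (Fin q) (Fin q) ℝ) (x1 : Fin p → ℝ) (y1 : Fin q → ℝ)
    (x2 : Fin p → ℝ) (y2 : Fin q → ℝ) : ℝ :=
  (1 / (6 * Real.sqrt (2 * SX.trace) * Real.sqrt (2 * SY.trace))) *
    (((x1 ⬝ᵥ x2) * (y1 ⬝ᵥ y2) - x1 ⬝ᵥ (SXY *ᵥ y1) - x2 ⬝ᵥ (SXY *ᵥ y2) + mFrob SXY ^ 2)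
      - (x1 ⬝ᵥ (SXY *ᵥ y2) + x2 ⬝ᵥ (SXY *ᵥ y1)))

/-- Symmetrization over all 24 ordered permutations of a 4-tuple, of the kernel
built from bivariate functions `U` and `V`. -/
def symKer {p q : ℕ} (U : (Fin p → ℝ) → (Fin p → ℝ) → ℝ)
    (V : (Fin q → ℝ) → (Fin q → ℝ) → ℝ)
    (x : Fin 4 → Fin p → ℝ) (y : Fin 4 → Fin q → ℝ) : ℝ :=
  (1 / 24 : ℝ) * ∑ σ : Equiv.Perm (Fin 4),
    (U (x (σ 0)) (x (σ 1)) * V (y (σ 0)) (y (σ 1))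
      + U (x (σ 0)) (x (σ 1)) * V (y (σ 2)) (y (σ 3))
      - 2 * (U (x (σ 0)) (x (σ 1)) * V (y (σ 0)) (y (σ 2))))

/-- The symmetric kernel `k` of the `U`-statistic representation. -/
def kerK {p q : ℕ} (x : Fin 4 → Fin p → ℝ) (y : Fin 4 → Fin q → ℝ) : ℝ :=
  symKer (fun a b => vecNorm (a - b)) (fun a b => vecNorm (a - b)) x y

def kMean {Ω : Type*} [MeasurableSpace Ω] {p q : ℕ} (μ : Measure Ω)
    (X : Fin 4 → Ω → Fin p → ℝ) (Y : Fin 4 → Ω → Fin q → ℝ) : ℝ :=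
  ∫ ω, kerK (fun j => X j ω) (fun j => Y j ω) ∂μ

def kp1 {Ω : Type*} [MeasurableSpace Ω] {p q : ℕ} (μ : Measure Ω)
    (X : Fin 4 → Ω → Fin p → ℝ) (Y : Fin 4 → Ω → Fin q → ℝ)
    (x1 : Fin p → ℝ) (y1 : Fin q → ℝ) : ℝ :=
  ∫ ω, kerK ![x1, X 1 ω, X 2 ω, X 3 ω] ![y1, Y 1 ω, Y 2 ω, Y 3 ω] ∂μ

def kp2 {Ω : Type*} [MeasurableSpace Ω] {p q : ℕ} (μ : Measure Ω)
    (X : Fin 4 → Ω → Fin p → ℝ) (Y : Fin 4 → Ω → Fin q → ℝ)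
    (x1 : Fin p → ℝ) (y1 : Fin q → ℝ) (x2 : Fin p → ℝ) (y2 : Fin q → ℝ) : ℝ :=
  ∫ ω, kerK ![x1, x2, X 2 ω, X 3 ω] ![y1, y2, Y 2 ω, Y 3 ω] ∂μ

def kp3 {Ω : Type*} [MeasurableSpace Ω] {p q : ℕ} (μ : Measure Ω)
    (X : Fin 4 → Ω → Fin p → ℝ) (Y : Fin 4 → Ω → Fin q → ℝ)
    (x1 : Fin p → ℝ) (y1 : Fin q → ℝ) (x2 : Fin p → ℝ) (y2 : Fin q → ℝ)
    (x3 : Fin p → ℝ) (y3 : Fin q → ℝ) : ℝ :=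
  ∫ ω, kerK ![x1, x2, x3, X 3 ω] ![y1, y2, y3, Y 3 ω] ∂μ

/-- First-order Hoeffding projection `g₁`. -/
def hg1 {Ω : Type*} [MeasurableSpace Ω] {p q : ℕ} (μ : Measure Ω)
    (X : Fin 4 → Ω → Fin p → ℝ) (Y : Fin 4 → Ω → Fin q → ℝ)
    (x1 : Fin p → ℝ) (y1 : Fin q → ℝ) : ℝ :=
  kp1 μ X Y x1 y1 - kMean μ X Y

/-- Second-order Hoeffding projection `g₂`. -/
def hg2 {Ω : Type*} [MeasurableSpace Ω] {p q : ℕ} (μ : Measure Ω)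
    (X : Fin 4 → Ω → Fin p → ℝ) (Y : Fin 4 → Ω → Fin q → ℝ)
    (x1 : Fin p → ℝ) (y1 : Fin q → ℝ) (x2 : Fin p → ℝ) (y2 : Fin q → ℝ) : ℝ :=
  kp2 μ X Y x1 y1 x2 y2 - kp1 μ X Y x1 y1 - kp1 μ X Y x2 y2 + kMean μ X Y

/-- Third-order Hoeffding projection `g₃`. -/
def hg3 {Ω : Type*} [MeasurableSpace Ω] {p q : ℕ} (μ : Measure Ω)
    (X : Fin 4 → Ω → Fin p → ℝ) (Y : Fin 4 → Ω → Fin q → ℝ)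
    (x1 : Fin p → ℝ) (y1 : Fin q → ℝ) (x2 : Fin p → ℝ) (y2 : Fin q → ℝ)
    (x3 : Fin p → ℝ) (y3 : Fin q → ℝ) : ℝ :=
  kp3 μ X Y x1 y1 x2 y2 x3 y3 - kMean μ X Y
    - (hg1 μ X Y x1 y1 + hg1 μ X Y x2 y2 + hg1 μ X Y x3 y3)
    - (hg2 μ X Y x1 y1 x2 y2 + hg2 μ X Y x1 y1 x3 y3 + hg2 μ X Y x2 y2 x3 y3)

/-- Fourth-order Hoeffding projection `g₄`. -/
def hg4 {Ω : Type*} [MeasurableSpace Ω] {p q : ℕ} (μ : Measure Ω)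
    (X : Fin 4 → Ω → Fin p → ℝ) (Y : Fin 4 → Ω → Fin q → ℝ)
    (x1 : Fin p → ℝ) (y1 : Fin q → ℝ) (x2 : Fin p → ℝ) (y2 : Fin q → ℝ)
    (x3 : Fin p → ℝ) (y3 : Fin q → ℝ) (x4 : Fin p → ℝ) (y4 : Fin q → ℝ) : ℝ :=
  kerK ![x1, x2, x3, x4] ![y1, y2, y3, y4] - kMean μ X Y
    - (hg1 μ X Y x1 y1 + hg1 μ X Y x2 y2 + hg1 μ X Y x3 y3 + hg1 μ X Y x4 y4)
    - (hg2 μ X Y x1 y1 x2 y2 + hg2 μ X Y x1 y1 x3 y3 + hg2 μ X Y x1 y1 x4 y4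
        + hg2 μ X Y x2 y2 x3 y3 + hg2 μ X Y x2 y2 x4 y4 + hg2 μ X Y x3 y3 x4 y4)
    - (hg3 μ X Y x1 y1 x2 y2 x3 y3 + hg3 μ X Y x1 y1 x2 y2 x4 y4
        + hg3 μ X Y x1 y1 x3 y3 x4 y4 + hg3 μ X Y x2 y2 x3 y3 x4 y4)

/-- The normalized squared-distance fluctuation `L_X`. -/
def Lfun {p : ℕ} (t2 : ℝ) (x1 x2 : Fin p → ℝ) : ℝ :=
  (vecNorm (x1 - x2) ^ 2 - t2) / t2

/-- The square-root remainder `h(u) = √(1+u) − 1 − u/2`. -/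
def hRem (u : ℝ) : ℝ := Real.sqrt (1 + u) - 1 - u / 2

/-- Double-centered remainder `R̄`. -/
def Rbar {Ω : Type*} [MeasurableSpace Ω] {p : ℕ} (μ : Measure Ω) (t2 : ℝ)
    (X0 X1 : Ω → Fin p → ℝ) (x1 x2 : Fin p → ℝ) : ℝ :=
  hRem (Lfun t2 x1 x2) - (∫ ω, hRem (Lfun t2 x1 (X0 ω)) ∂μ)
    - (∫ ω, hRem (Lfun t2 (X0 ω) x2) ∂μ) + ∫ ω, hRem (Lfun t2 (X0 ω) (X1 ω)) ∂μ

/-- The kernel assumption (Assumption 2.2 of the paper). -/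
def KernelAssumption (f : ℝ → ℝ) : Prop :=
  ContDiffOn ℝ 4 f (Set.Ioi 0) ∧
  (∀ M' : ℝ, 0 < M' → ∃ B : ℝ, ∀ x ∈ Set.Ico (0 : ℝ) M', |f x| ≤ B) ∧
  (∀ ε : ℝ, 0 < ε → ∃ Cε : ℝ, ∀ l ∈ Finset.Icc 1 4, ∀ x : ℝ, ε ≤ x →
    |iteratedDeriv l f x| ≤ Cε) ∧
  (∀ ε : ℝ, 0 < ε → ∃ cε : ℝ, 0 < cε ∧ ∀ x ∈ Set.Ioo ε ε⁻¹, cε ≤ |deriv f x|) ∧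
  (∃ r : ℝ, 0 < r ∧ ∃ B δ : ℝ, 0 < δ ∧ ∀ x ∈ Set.Ioo (0 : ℝ) δ, ∀ l ∈ Finset.Icc 1 4,
    x ^ r * |iteratedDeriv l f x| ≤ B)



/-!
Write `T = ∑ U_kl V_kl`, `Q = ∑_k r_k(U) r_k(V)` with row sums `r`, and `S_U`, `S_V` for the
total sums of the two distance matrices. For a symmetric zero-diagonal matrix, `U`-centering
adds `α_k + α_l` to the entry `(k, l)` and leaves off-diagonal row sums equal to zero, so
`∑_{k ≠ l} U*_kl V*_kl = T - 2Q/(n-2) + S_U S_V/((n-1)(n-2))`. Summing the kernel over all injective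
4-tuples, one index at a time, gives `(n-1)(n-2)T - 2(n-1)Q + S_U S_V`, and averaging over the 24
orderings of every increasing 4-tuple is the same as summing over all injective ones. The two
sides agree because `n(n-1)(n-2)(n-3) = 24 C(n,4)`. The double-centered kernel differs from the
plain one by `φ(x) + φ(x')`, and `U`-centering annihilates such shifts off the diagonal.
-/

theorem vecNorm_sub_comm {ι : Type*} [Fintype ι] (a b : ι → ℝ) :
    vecNorm (a - b) = vecNorm (b - a) := by
  simp only [vecNorm, Pi.sub_apply]
  congr 1
  exact Finset.sum_congr rfl fun i _ => by ring

theorem vecNorm_zero {ι : Type*} [Fintype ι] : vecNorm (0 : ι → ℝ) = 0 := by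
  simp [vecNorm]

namespace DistanceCovariance

open Finset

theorem sum_fun_fin_four {α M : Type*} [Fintype α] [AddCommMonoid M] (F : (Fin 4 → α) → M) :
    ∑ t, F t = ∑ a, ∑ b, ∑ c, ∑ d, F ![a, b, c, d] := by
  simp only [← (Fin.consEquiv fun _ => α).sum_comp, Fintype.sum_prod_type]
  simp only [univ_unique, Fin.consEquiv, Equiv.coe_fn_mk, sum_singleton]
  rfl

theorem strictMono_vecCons_four_iff {α : Type*} [Preorder α] (a b c d : α) :
    StrictMono ![a, b, c, d] ↔ a < b ∧ b < c ∧ c < d := by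
  simp [Fin.strictMono_iff_lt_succ, Fin.forall_fin_succ]

theorem injective_vecCons_four_iff {α : Type*} [DecidableEq α] (a b c d : α) :
    Function.Injective ![a, b, c, d]
      ↔ (a ≠ b ∧ c ∉ ({a, b} : Finset α)) ∧ d ∉ ({a, b, c} : Finset α) := by
  simp only [Matrix.vecCons, Fin.cons_injective_iff, Fin.range_cons, Matrix.range_empty,
    Function.injective_of_subsingleton, Set.mem_insert_iff, Finset.mem_insert,
    Finset.mem_singleton, Set.mem_empty_iff_false]
  grind

theorem sum_ite_not_mem {ι M : Type*} [Fintype ι] [DecidableEq ι] [AddCommGroup M]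
    (s : Finset ι) (F : ι → M) :
    ∑ j, (if j ∉ s then F j else 0) = ∑ j, F j - ∑ j ∈ s, F j := by
  rw [← sum_filter, eq_sub_iff_add_eq, ← sum_compl_add_sum s]
  simp [compl_eq_univ_sdiff, filter_not]

theorem sum_offDiag_eq_sub_diag {ι M : Type*} [Fintype ι] [DecidableEq ι] [AddCommGroup M]
    (f : ι → ι → M) :
    ∑ k, ∑ l, (if k ≠ l then f k l else 0) = ∑ k, ∑ l, f k l - ∑ k, f k k := by
  rw [← sum_sub_distrib]
  refine sum_congr rfl fun k _ => ?_
  rw [sum_ite, sum_const_zero, add_zero, filter_ne, sum_erase_eq_sub (mem_univ k)]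

theorem strictMono_comp_perm_iff {α : Type*} [LinearOrder α] {k : ℕ} {v : Fin k → α}
    (hv : Function.Injective v) (τ : Equiv.Perm (Fin k)) :
    StrictMono (v ∘ τ) ↔ τ = Tuple.sort v := by
  constructor
  · intro h
    have := Tuple.unique_monotone h.monotone (Tuple.monotone_sort v)
    exact Equiv.ext fun i => hv (congrFun this i)
  · rintro rfl
    exact (Tuple.monotone_sort v).strictMono_of_injective (hv.comp (Tuple.sort v).injective)

/-- Every injective tuple is, in exactly one way, an increasing tuple composed with a
permutation. -/
theorem sum_strictMono_sum_perm {α M : Type*} [Fintype α] [LinearOrder α] [AddCommMonoid M]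
    {k : ℕ} (g : (Fin k → α) → M) :
    ∑ u : Fin k → α, (if StrictMono u then ∑ σ : Equiv.Perm (Fin k), g (u ∘ σ) else 0)
      = ∑ v : Fin k → α, if Function.Injective v then g v else 0 := by
  calc ∑ u : Fin k → α, (if StrictMono u then ∑ σ : Equiv.Perm (Fin k), g (u ∘ σ) else 0)
      = ∑ σ : Equiv.Perm (Fin k), ∑ u : Fin k → α, if StrictMono u then g (u ∘ σ) else 0 := by
        rw [sum_comm]
        exact sum_congr rfl fun u _ => by split_ifs <;> simp
    _ = ∑ σ : Equiv.Perm (Fin k), ∑ v : Fin k → α, if StrictMono (v ∘ ⇑σ⁻¹) then g v else 0 :=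
        sum_congr rfl fun σ _ =>
          Fintype.sum_equiv (σ.arrowCongr (Equiv.refl α)).symm _ _ fun u => by
            simp [Equiv.arrowCongr, Function.comp_assoc]
    _ = ∑ v : Fin k → α, ∑ τ : Equiv.Perm (Fin k), if StrictMono (v ∘ τ) then g v else 0 := by
        rw [sum_comm]
        exact sum_congr rfl fun v _ => Equiv.sum_comp (Equiv.inv _)
          fun τ : Equiv.Perm (Fin k) => if StrictMono (v ∘ τ) then g v else 0
    _ = ∑ v : Fin k → α, if Function.Injective v then g v else 0 := by
        refine sum_congr rfl fun v _ => ?_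
        split_ifs with hv
        · simp only [strictMono_comp_perm_iff hv, sum_ite_eq', mem_univ, if_true]
        · refine sum_eq_zero fun τ _ => if_neg fun h => hv ?_
          simpa using h.injective.comp τ.symm.injective

theorem cast_choose_four_mul (n : ℕ) :
    (n.choose 4 : ℝ) * 24 = n * (n - 1) * (n - 2) * (n - 3) := by
  rw [Nat.cast_choose_eq_descPochhammer_div]
  simp [Nat.factorial, descPochhammer_succ_right]

variable {n : ℕ}

def centeringShift (U : Matrix (Fin n) (Fin n) ℝ) (k : Fin n) : ℝ :=
  (∑ i, ∑ j, U i j) / (((n : ℝ) - 1) * ((n : ℝ) - 2)) / 2 - (∑ j, U k j) / ((n : ℝ) - 2)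

theorem uCenter_apply_of_isSymm {U : Matrix (Fin n) (Fin n) ℝ} (hU : U.IsSymm) (k l : Fin n) :
    uCenter U k l = U k l + centeringShift U k + centeringShift U l := by
  have hcol : ∑ j, U j l = ∑ j, U l j := sum_congr rfl fun j _ => hU.apply l j
  simp only [uCenter, centeringShift, Matrix.of_apply, hcol]
  ring

theorem sum_centeringShift (U : Matrix (Fin n) (Fin n) ℝ) :
    ∑ k, centeringShift U k
      = n * ((∑ i, ∑ j, U i j) / (((n : ℝ) - 1) * ((n : ℝ) - 2)) / 2)
        - (∑ i, ∑ j, U i j) / ((n : ℝ) - 2) := by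
  simp only [centeringShift, sum_sub_distrib, ← sum_div, sum_const, card_univ,
    Fintype.card_fin, nsmul_eq_mul]
  ring

theorem sum_uCenter_row_eq_diag (hn : 3 ≤ n) {U : Matrix (Fin n) (Fin n) ℝ} (hU : U.IsSymm)
    (hU0 : ∀ i, U i i = 0) (k : Fin n) :
    ∑ l, uCenter U k l = uCenter U k k := by
  have hn' : (3 : ℝ) ≤ n := by exact_mod_cast hn
  have h1 : (n : ℝ) - 1 ≠ 0 := by linarith
  have h2 : (n : ℝ) - 2 ≠ 0 := by linarith
  simp only [uCenter_apply_of_isSymm hU, sum_add_distrib, sum_const, card_univ, Fintype.card_fin,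
    nsmul_eq_mul, sum_centeringShift, hU0]
  simp only [centeringShift]
  field_simp
  ring

theorem sum_shift_row (φ : Fin n → ℝ) (k : Fin n) :
    ∑ j, (if k = j then 0 else φ k + φ j) = ((n : ℝ) - 2) * φ k + ∑ j, φ j := by
  have h : ∀ j, (if k = j then 0 else φ k + φ j) = φ k + φ j - if k = j then φ k + φ j else 0 := by
    intro j; split_ifs <;> simp_all
  simp only [h, sum_sub_distrib, sum_add_distrib, sum_ite_eq, mem_univ, if_true, sum_const,
    card_univ, Fintype.card_fin, nsmul_eq_mul]
  ring

theorem centeringShift_of_offDiag_shift (hn : 3 ≤ n) {U U' : Matrix (Fin n) (Fin n) ℝ}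
    (φ : Fin n → ℝ) (h : ∀ k l, U' k l = U k l + if k = l then 0 else φ k + φ l) (k : Fin n) :
    centeringShift U' k = centeringShift U k - φ k := by
  have hn' : (3 : ℝ) ≤ n := by exact_mod_cast hn
  have h1 : (n : ℝ) - 1 ≠ 0 := by linarith
  have h2 : (n : ℝ) - 2 ≠ 0 := by linarith
  simp only [centeringShift, h, sum_add_distrib, sum_shift_row, ← mul_sum, sum_const, card_univ,
    Fintype.card_fin, nsmul_eq_mul]
  field_simp
  ring

theorem uCenter_apply_of_offDiag_shift (hn : 3 ≤ n) {U U' : Matrix (Fin n) (Fin n) ℝ}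
    (hU : U.IsSymm) (φ : Fin n → ℝ) (h : ∀ k l, U' k l = U k l + if k = l then 0 else φ k + φ l)
    {k l : Fin n} (hkl : k ≠ l) :
    uCenter U' k l = uCenter U k l := by
  have hU' : U'.IsSymm := Matrix.IsSymm.ext fun i j => by
    rw [h, h, hU.apply]
    split_ifs <;> simp_all [add_comm (φ i)]
  rw [uCenter_apply_of_isSymm hU', uCenter_apply_of_isSymm hU, h, if_neg hkl,
    centeringShift_of_offDiag_shift hn φ h, centeringShift_of_offDiag_shift hn φ h]
  ring

theorem sum_offDiag_uCenter_mul_uCenter (hn : 3 ≤ n) {U V : Matrix (Fin n) (Fin n) ℝ}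
    (hU : U.IsSymm) (hU0 : ∀ i, U i i = 0) (hV : V.IsSymm) (hV0 : ∀ i, V i i = 0) :
    ∑ k, ∑ l, (if k ≠ l then uCenter U k l * uCenter V k l else 0)
      = ∑ k, ∑ l, U k l * V k l - 2 * (∑ k, (∑ l, U k l) * ∑ l, V k l) / ((n : ℝ) - 2)
        + (∑ k, ∑ l, U k l) * (∑ k, ∑ l, V k l) / (((n : ℝ) - 1) * ((n : ℝ) - 2)) := by
  have hrow := sum_uCenter_row_eq_diag hn hU hU0
  have hcol : ∀ l, ∑ k, uCenter U k l = uCenter U l l := fun l => by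
    rw [← hrow l]
    refine sum_congr rfl fun k _ => ?_
    rw [uCenter_apply_of_isSymm hU, uCenter_apply_of_isSymm hU, hU.apply]
    ring
  have hVcol : ∀ l, ∑ k, V k l = ∑ k, V l k := fun l => sum_congr rfl fun k _ => hV.apply l k
  -- the shift separating `uCenter V` from `V` is orthogonal to `uCenter U` off the diagonal
  have hstrip : ∑ k, ∑ l, (if k ≠ l then uCenter U k l * uCenter V k l else 0)
      = ∑ k, ∑ l, uCenter U k l * V k l := by
    rw [sum_offDiag_eq_sub_diag]
    simp only [uCenter_apply_of_isSymm hV, hV0, mul_add, sum_add_distrib, ← sum_mul, hrow]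
    rw [sum_comm (f := fun k l => uCenter U k l * centeringShift V l)]
    simp only [← sum_mul, hcol]
    ring
  rw [hstrip]
  simp only [uCenter_apply_of_isSymm hU, add_mul, sum_add_distrib, ← mul_sum]
  rw [sum_comm (f := fun k l => centeringShift U l * V k l)]
  simp only [← mul_sum, hVcol, centeringShift, sub_mul, sum_sub_distrib, div_mul_eq_mul_div,
    ← sum_div]
  ring

def dcovKernel (U V : Matrix (Fin n) (Fin n) ℝ) (t : Fin 4 → Fin n) : ℝ :=
  U (t 0) (t 1) * V (t 0) (t 1) + U (t 0) (t 1) * V (t 2) (t 3)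
    - 2 * (U (t 0) (t 1) * V (t 0) (t 2))

section Kernel

variable {U V : Matrix (Fin n) (Fin n) ℝ}

theorem dcovKernel_congr_of_injective {U' V' : Matrix (Fin n) (Fin n) ℝ} {t : Fin 4 → Fin n}
    (ht : Function.Injective t) (hU : ∀ i j, i ≠ j → U i j = U' i j)
    (hV : ∀ i j, i ≠ j → V i j = V' i j) :
    dcovKernel U V t = dcovKernel U' V' t := by
  have h01 : t 0 ≠ t 1 := ht.ne (by decide)
  have h02 : t 0 ≠ t 2 := ht.ne (by decide)
  have h23 : t 2 ≠ t 3 := ht.ne (by decide)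
  simp only [dcovKernel, hU _ _ h01, hV _ _ h01, hV _ _ h02, hV _ _ h23]

theorem sum_dcovKernel_last (hV : V.IsSymm) (hV0 : ∀ i, V i i = 0) {a b c : Fin n}
    (hab : a ≠ b) (hac : a ≠ c) (hbc : b ≠ c) :
    ∑ d, (if d ∉ ({a, b, c} : Finset (Fin n)) then dcovKernel U V ![a, b, c, d] else 0)
      = U a b * (((n : ℝ) - 3) * V a b + ∑ j, V c j - V a c - V b c
          - 2 * ((n : ℝ) - 3) * V a c) := by
  rw [sum_ite_not_mem]
  simp only [dcovKernel, cons_val_zero, cons_val_one, Matrix.cons_val, sum_sub_distrib,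
    sum_add_distrib, sum_const, card_univ, Fintype.card_fin, nsmul_eq_mul, ← mul_sum, mem_insert,
    mem_singleton, hab, hac, hbc, or_self, not_false_eq_true, card_insert_of_notMem,
    card_singleton, sum_insert, sum_singleton, hV0, add_zero]
  rw [hV.apply a c, hV.apply b c]
  ring

theorem sum_dcovKernel_last_two (hV : V.IsSymm) (hV0 : ∀ i, V i i = 0) {a b : Fin n}
    (hab : a ≠ b) :
    ∑ c, (if c ∉ ({a, b} : Finset (Fin n)) then
        ∑ d, (if d ∉ ({a, b, c} : Finset (Fin n)) then dcovKernel U V ![a, b, c, d] else 0)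
      else 0)
      = U a b * (((n : ℝ) - 1) * ((n : ℝ) - 2) * V a b + ∑ i, ∑ j, V i j
          - 2 * ∑ j, V b j - 2 * ((n : ℝ) - 2) * ∑ j, V a j) := by
  have hlast : ∀ c ∉ ({a, b} : Finset (Fin n)),
      ∑ d, (if d ∉ ({a, b, c} : Finset (Fin n)) then dcovKernel U V ![a, b, c, d] else 0)
        = U a b * (((n : ℝ) - 3) * V a b + ∑ j, V c j - V a c - V b c
          - 2 * ((n : ℝ) - 3) * V a c) := fun c hc => by
    simp only [mem_insert, mem_singleton, not_or] at hc
    exact sum_dcovKernel_last hV hV0 hab (Ne.symm hc.1) (Ne.symm hc.2)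
  rw [sum_congr rfl fun c _ => ite_congr rfl (hlast c) fun _ => rfl, sum_ite_not_mem]
  simp only [← mul_sum, sum_sub_distrib, sum_add_distrib, sum_const, card_univ, Fintype.card_fin,
    nsmul_eq_mul, mem_singleton, hab, not_false_eq_true, card_insert_of_notMem, card_singleton,
    sum_insert, sum_singleton, hV0, zero_add, add_zero]
  rw [hV.apply a b]
  ring

theorem sum_injective_dcovKernel (hU : U.IsSymm) (hU0 : ∀ i, U i i = 0) (hV : V.IsSymm)
    (hV0 : ∀ i, V i i = 0) :
    ∑ t, (if Function.Injective t then dcovKernel U V t else 0)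
      = ((n : ℝ) - 1) * ((n : ℝ) - 2) * ∑ k, ∑ l, U k l * V k l
        - 2 * ((n : ℝ) - 1) * ∑ k, (∑ l, U k l) * ∑ l, V k l
        + (∑ k, ∑ l, U k l) * (∑ k, ∑ l, V k l) := by
  rw [sum_fun_fin_four]
  simp only [injective_vecCons_four_iff, ite_and, sum_ite_irrel, sum_const_zero]
  have hpair : ∀ a b, (if a ≠ b then
      ∑ c, (if c ∉ ({a, b} : Finset (Fin n)) then
        ∑ d, (if d ∉ ({a, b, c} : Finset (Fin n)) then dcovKernel U V ![a, b, c, d] else 0)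
      else 0) else 0)
      = ((n : ℝ) - 1) * ((n : ℝ) - 2) * (U a b * V a b) + U a b * ∑ i, ∑ j, V i j
        - 2 * (U a b * ∑ j, V b j) - 2 * ((n : ℝ) - 2) * (U a b * ∑ j, V a j) := fun a b => by
    split_ifs with hab
    · rw [sum_dcovKernel_last_two hV hV0 hab]
      ring
    · simp [not_not.mp hab, hU0]
  have hUcol : ∀ b, ∑ a, U a b = ∑ a, U b a := fun b => sum_congr rfl fun a _ => hU.apply b a
  simp only [hpair, sum_add_distrib, sum_sub_distrib, ← mul_sum, ← sum_mul]
  rw [sum_comm (f := fun a b => U a b * ∑ j, V b j)]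
  simp only [← sum_mul, hUcol]
  ring

end Kernel

theorem dcov_uCenter_eq_uStatistic (hn : 4 ≤ n) {U V : Matrix (Fin n) (Fin n) ℝ}
    (hU : U.IsSymm) (hU0 : ∀ i, U i i = 0) (hV : V.IsSymm) (hV0 : ∀ i, V i i = 0) :
    ((n : ℝ) * ((n : ℝ) - 3))⁻¹ * ∑ k, ∑ l, (if k ≠ l then uCenter U k l * uCenter V k l else 0)
      = ((n.choose 4 : ℝ))⁻¹ * ∑ a, ∑ b, ∑ c, ∑ d,
          (if a < b ∧ b < c ∧ c < d then
            (1 / 24 : ℝ) * ∑ σ : Equiv.Perm (Fin 4), dcovKernel U V (![a, b, c, d] ∘ σ)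
          else 0) := by
  have hsorted : ∑ a, ∑ b, ∑ c, ∑ d, (if a < b ∧ b < c ∧ c < d then
        (1 / 24 : ℝ) * ∑ σ : Equiv.Perm (Fin 4), dcovKernel U V (![a, b, c, d] ∘ σ) else 0)
      = (1 / 24 : ℝ) * ∑ t, (if Function.Injective t then dcovKernel U V t else 0) := by
    rw [← sum_strictMono_sum_perm, mul_sum, sum_fun_fin_four]
    simp only [strictMono_vecCons_four_iff, mul_ite, mul_zero]
  have hn' : (4 : ℝ) ≤ n := by exact_mod_cast hn
  have hchoose := cast_choose_four_mul n
  have h0 : (n : ℝ) ≠ 0 := by linarith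
  have h1 : (n : ℝ) - 1 ≠ 0 := by linarith
  have h2 : (n : ℝ) - 2 ≠ 0 := by linarith
  have h3 : (n : ℝ) - 3 ≠ 0 := by linarith
  rw [sum_offDiag_uCenter_mul_uCenter (by omega) hU hU0 hV hV0, hsorted,
    sum_injective_dcovKernel hU hU0 hV hV0,
    show (n.choose 4 : ℝ) = n * (n - 1) * (n - 2) * (n - 3) / 24 by linarith]
  field_simp

theorem symKer_comp {p q : ℕ} (U : (Fin p → ℝ) → (Fin p → ℝ) → ℝ)
    (V : (Fin q → ℝ) → (Fin q → ℝ) → ℝ) (x : Fin n → Fin p → ℝ) (y : Fin n → Fin q → ℝ)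
    (t : Fin 4 → Fin n) :
    symKer U V (fun j => x (t j)) (fun j => y (t j))
      = (1 / 24 : ℝ) * ∑ σ : Equiv.Perm (Fin 4),
          dcovKernel (Matrix.of fun i j => U (x i) (x j)) (Matrix.of fun i j => V (y i) (y j))
            (t ∘ σ) :=
  rfl

section Truncation

variable {E : Type*} (x : Fin n → E) {U : E → E → ℝ}

theorem isSymm_truncate (hU : ∀ a b, U a b = U b a) :
    (Matrix.of fun i j => if i = j then 0 else U (x i) (x j)).IsSymm :=
  Matrix.IsSymm.ext fun i j => by simp only [Matrix.of_apply, eq_comm (a := j), hU]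

theorem uCenter_truncate_apply_of_shift (hn : 3 ≤ n) {D : E → E → ℝ} (φ : E → ℝ)
    (hD : ∀ a b, D a b = D b a) (hD0 : ∀ a, D a a = 0) (hU : ∀ a b, U a b = D a b + φ a + φ b)
    {k l : Fin n} (hkl : k ≠ l) :
    uCenter (Matrix.of fun i j => if i = j then 0 else U (x i) (x j)) k l
      = uCenter (Matrix.of fun i j => D (x i) (x j)) k l := by
  refine uCenter_apply_of_offDiag_shift hn (Matrix.IsSymm.ext fun i j => hD _ _)
    (fun i => φ (x i)) (fun i j => ?_) hkl
  by_cases hij : i = j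
  · simp [hij, hD0]
  · simp [hij, hU, add_assoc]

end Truncation

theorem dcovStar_eq_uStatistic_of_shift {p q : ℕ} (hn : 4 ≤ n)
    (x : Fin n → Fin p → ℝ) (y : Fin n → Fin q → ℝ)
    (U : (Fin p → ℝ) → (Fin p → ℝ) → ℝ) (V : (Fin q → ℝ) → (Fin q → ℝ) → ℝ)
    (φ : (Fin p → ℝ) → ℝ) (ψ : (Fin q → ℝ) → ℝ)
    (hU : ∀ a b, U a b = vecNorm (a - b) + φ a + φ b)
    (hV : ∀ a b, V a b = vecNorm (a - b) + ψ a + ψ b) :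
    dcovStar x y
      = ((n.choose 4 : ℝ))⁻¹ * ∑ i1, ∑ i2, ∑ i3, ∑ i4,
          (if i1 < i2 ∧ i2 < i3 ∧ i3 < i4 then
            symKer U V (fun j => x (![i1, i2, i3, i4] j)) (fun j => y (![i1, i2, i3, i4] j))
          else 0) := by
  have hUs : ∀ a b, U a b = U b a := fun a b => by rw [hU, hU, vecNorm_sub_comm]; ring
  have hVs : ∀ a b, V a b = V b a := fun a b => by rw [hV, hV, vecNorm_sub_comm]; ring
  have hcenter : ∀ k l : Fin n, (if k ≠ l then
        uCenter (Matrix.of fun i j => vecNorm (x i - x j)) k l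
          * uCenter (Matrix.of fun i j => vecNorm (y i - y j)) k l else 0)
      = if k ≠ l then
        uCenter (Matrix.of fun i j => if i = j then 0 else U (x i) (x j)) k l
          * uCenter (Matrix.of fun i j => if i = j then 0 else V (y i) (y j)) k l else 0 :=
    fun k l => ite_congr rfl (fun hkl => by
      rw [uCenter_truncate_apply_of_shift x (by omega) φ (fun a b => vecNorm_sub_comm a b)
          (fun a => by simp [vecNorm_zero]) hU hkl,
        uCenter_truncate_apply_of_shift y (by omega) ψ (fun a b => vecNorm_sub_comm a b)
          (fun a => by simp [vecNorm_zero]) hV hkl]) fun _ => rfl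
  rw [dcovStar, sum_congr rfl fun k _ => sum_congr rfl fun l _ => hcenter k l,
    dcov_uCenter_eq_uStatistic hn (isSymm_truncate x hUs) (fun i => by simp)
      (isSymm_truncate y hVs) (fun i => by simp)]
  refine congrArg _ (sum_congr rfl fun a _ => sum_congr rfl fun b _ => sum_congr rfl fun c _ =>
    sum_congr rfl fun d _ => ite_congr rfl (fun habcd => ?_) fun _ => rfl)
  have ht := ((strictMono_vecCons_four_iff a b c d).mpr habcd).injective
  rw [symKer_comp]
  exact congrArg _ (sum_congr rfl fun σ _ => dcovKernel_congr_of_injective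
    (ht.comp σ.injective) (fun i j hij => if_neg hij) (fun i j hij => if_neg hij))

end DistanceCovariance

/-- Proposition 2.1: `U`-statistic representation of the
sample distance covariance, with either the plain kernel or the
double-centered kernel. -/
theorem statement0 {Ω : Type} [MeasurableSpace Ω] (μ : Measure Ω)
    (p q n : ℕ) (hn : 4 ≤ n)
    (X : Fin n → Ω → Fin p → ℝ) (Y : Fin n → Ω → Fin q → ℝ) :
    ∀ ω : Ω,
      (dcovStar (fun i => X i ω) (fun i => Y i ω) =
        ((n.choose 4 : ℝ))⁻¹ * ∑ i1, ∑ i2, ∑ i3, ∑ i4,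
          (if i1 < i2 ∧ i2 < i3 ∧ i3 < i4 then
            symKer (fun a b => vecNorm (a - b)) (fun a b => vecNorm (a - b))
              (fun j => X (![i1, i2, i3, i4] j) ω) (fun j => Y (![i1, i2, i3, i4] j) ω)
          else 0))
      ∧
      (dcovStar (fun i => X i ω) (fun i => Y i ω) =
        ((n.choose 4 : ℝ))⁻¹ * ∑ i1, ∑ i2, ∑ i3, ∑ i4,
          (if i1 < i2 ∧ i2 < i3 ∧ i3 < i4 then
            symKer
              (fun a b => vecNorm (a - b)
                - (∫ ω', vecNorm (a - X ⟨0, by omega⟩ ω') ∂μ)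
                - (∫ ω', vecNorm (X ⟨0, by omega⟩ ω' - b) ∂μ)
                + ∫ ω', vecNorm (X ⟨0, by omega⟩ ω' - X ⟨1, by omega⟩ ω') ∂μ)
              (fun a b => vecNorm (a - b)
                - (∫ ω', vecNorm (a - Y ⟨0, by omega⟩ ω') ∂μ)
                - (∫ ω', vecNorm (Y ⟨0, by omega⟩ ω' - b) ∂μ)
                + ∫ ω', vecNorm (Y ⟨0, by omega⟩ ω' - Y ⟨1, by omega⟩ ω') ∂μ)
              (fun j => X (![i1, i2, i3, i4] j) ω) (fun j => Y (![i1, i2, i3, i4] j) ω)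
          else 0)) := by
  intro ω
  have hswap : ∀ {r : ℕ} (Z : Ω → Fin r → ℝ) (b : Fin r → ℝ),
      ∫ ω', vecNorm (Z ω' - b) ∂μ = ∫ ω', vecNorm (b - Z ω') ∂μ := fun Z b =>
    integral_congr_ae (Filter.Eventually.of_forall fun ω' => vecNorm_sub_comm _ _)
  refine ⟨DistanceCovariance.dcovStar_eq_uStatistic_of_shift hn _ _ _ _ (fun _ => 0) (fun _ => 0)
    (fun _ _ => by ring) (fun _ _ => by ring),
    DistanceCovariance.dcovStar_eq_uStatistic_of_shift hn _ _ _ _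
      (fun a => (∫ ω', vecNorm (X ⟨0, by omega⟩ ω' - X ⟨1, by omega⟩ ω') ∂μ) / 2
        - ∫ ω', vecNorm (a - X ⟨0, by omega⟩ ω') ∂μ)
      (fun b => (∫ ω', vecNorm (Y ⟨0, by omega⟩ ω' - Y ⟨1, by omega⟩ ω') ∂μ) / 2
        - ∫ ω', vecNorm (b - Y ⟨0, by omega⟩ ω') ∂μ)
      (fun a b => ?_) (fun a b => ?_)⟩
  · rw [hswap]; ring
  · rw [hswap]; ring

end
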